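/- arXiv:2307.16760 — 6 statements merged into one kernel-verified Lean document; each statement's English description precedes it below -/
import Mathlib

section
/- For every k-uniform hypergraph H with k ≥ 2, m_k(H) ≤ m(H) + C(v(H), k-2), where C(n, r) denotes the binomial coefficient. -/
open Finset
open scoped Classical

/-- A hypergraph is given by its (finite) edge set; its vertex set is the
union of its edges. -/
abbrev HG := Finset (Finset ℕ)

namespace HG

/-- The vertex set of a hypergraph. -/
def vset (H : HG) : Finset ℕ := H.sup id

/-- Number of vertices. -/
def nV (H : HG) : ℕ := (vset H).card

/-- Number of edges. -/
def nE (H : HG) : ℕ := H.card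

/-- `H` is `k`-uniform. -/
def IsUniform (k : ℕ) (H : HG) : Prop := ∀ e ∈ H, e.card = k

/-- The density `e(H)/v(H)` (junk value `0` when `H` is empty). -/
noncomputable def dens (H : HG) : ℝ := (nE H : ℝ) / (nV H : ℝ)

/-- The maximum density `m(H) = max_{J ⊆ H} d(J)`. -/
noncomputable def maxDens (H : HG) : ℝ :=
  H.powerset.sup' ⟨∅, Finset.empty_mem_powerset H⟩ dens

/-- `d₁(H) = e(H)/(v(H)-1)` if `v(H) ≥ 2`, else `0`. -/
noncomputable def d1 (H : HG) : ℝ :=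
  if 2 ≤ nV H then (nE H : ℝ) / ((nV H : ℝ) - 1) else 0

/-- The arboricity (`1`-density) `ar(H) = m₁(H) = max_{J ⊆ H} d₁(J)`. -/
noncomputable def ar (H : HG) : ℝ :=
  H.powerset.sup' ⟨∅, Finset.empty_mem_powerset H⟩ d1

/-- `d_k(H) = (e(H)-1)/(v(H)-k)` for non-empty `H` with `v(H) ≥ k+1`,
`1/k` for a single `k`-edge, and `0` otherwise. -/
noncomputable def dK (k : ℕ) (H : HG) : ℝ :=
  if H.Nonempty ∧ k + 1 ≤ nV H then ((nE H : ℝ) - 1) / ((nV H : ℝ) - (k : ℝ))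
  else if nE H = 1 ∧ nV H = k then 1 / (k : ℝ)
  else 0

/-- The `k`-density `m_k(H) = max_{J ⊆ H} d_k(J)`. -/
noncomputable def mK (k : ℕ) (H : HG) : ℝ :=
  H.powerset.sup' ⟨∅, Finset.empty_mem_powerset H⟩ (dK k)

/-- The asymmetric density
`d_k(H₁,H₂) = e(H₁)/(v(H₁) - k + 1/m_k(H₂))` when `H₂` is non-empty and
`v(H₁) ≥ k`, else `0`. -/
noncomputable def dKK (k : ℕ) (H1 H2 : HG) : ℝ :=
  if H2.Nonempty ∧ k ≤ nV H1 then
    (nE H1 : ℝ) / ((nV H1 : ℝ) - (k : ℝ) + 1 / mK k H2)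
  else 0

/-- The asymmetric `k`-density `m_k(H₁,H₂) = max_{J ⊆ H₁} d_k(J,H₂)`. -/
noncomputable def mKK (k : ℕ) (H1 H2 : HG) : ℝ :=
  H1.powerset.sup' ⟨∅, Finset.empty_mem_powerset H1⟩ (fun J => dKK k J H2)

/-- `K` is a copy of `H` (image of `H` under an injection of its vertices). -/
def IsCopy (H K : HG) : Prop :=
  ∃ f : ℕ → ℕ, Set.InjOn f (vset H) ∧ K = H.image (fun e => e.image f)

/-- Degree of a vertex. -/
def deg (H : HG) (v : ℕ) : ℕ := (H.filter (fun e => v ∈ e)).card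

/-- Minimum degree `δ(H)` (junk value `0` for the empty hypergraph). -/
noncomputable def minDeg (H : HG) : ℕ :=
  if h : (vset H).Nonempty then (vset H).inf' h (deg H) else 0

/-- `δ_max(G) = max_{G' ⊆ G} δ(G')`. -/
noncomputable def maxMinDeg (G : HG) : ℕ := G.powerset.sup minDeg

/-- `H` is strictly `k`-balanced. -/
def StrictBal (k : ℕ) (H : HG) : Prop := ∀ J : HG, J ⊂ H → dK k J < mK k H

/-- `H₁` is strictly balanced with respect to `d_k(·, H₂)`. -/
def StrictBalWrt (k : ℕ) (H1 H2 : HG) : Prop :=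
  ∀ J : HG, J ⊂ H1 → dKK k J H2 < mKK k H1 H2

/-- `H` is connected. -/
def Conn (H : HG) : Prop :=
  ∀ u ∈ vset H, ∀ v ∈ vset H,
    Relation.ReflTransGen (fun a b => ∃ e ∈ H, a ∈ e ∧ b ∈ e) u v

end HG

open HG

lemma keylem (k v V : ℕ) (hk : 2 ≤ k) (hv : k + 1 ≤ v) (hV : v ≤ V) :
    k * v.choose k ≤ V.choose (k-2) * (v * (v-k)) + v := by
  have h1 : v * (v-1).choose (k-1) = v.choose k * k := by
    have := Nat.add_one_mul_choose_eq (v-1) (k-1)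
    have hv1 : v - 1 + 1 = v := by omega
    have hk1 : k - 1 + 1 = k := by omega
    simp only [Nat.succ_eq_add_one, hv1, hk1] at this; exact this
  have h2 : (v-1).choose (k-1) = ∑ m ∈ Icc (k-2) (v-2), m.choose (k-2) := by
    rw [Nat.sum_Icc_choose]
    congr 1 <;> omega
  have h3 : Icc (k-2) (v-2) = insert (k-2) (Icc (k-1) (v-2)) := by
    ext x; simp only [mem_Icc, mem_insert]; omega
  have h4 : (k-2) ∉ Icc (k-1) (v-2) := by simp only [mem_Icc]; omega
  have h5 : ∑ m ∈ Icc (k-1) (v-2), m.choose (k-2) ≤ (v - k) * V.choose (k-2) := by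
    calc ∑ m ∈ Icc (k-1) (v-2), m.choose (k-2)
        ≤ (Icc (k-1) (v-2)).card • V.choose (k-2) := by
          apply Finset.sum_le_card_nsmul
          intro x hx
          simp only [mem_Icc] at hx
          exact Nat.choose_le_choose _ (by omega)
      _ = (v - k) * V.choose (k-2) := by
          rw [Nat.card_Icc, smul_eq_mul]; congr 1; omega
  have h6 : (v-1).choose (k-1) ≤ 1 + (v-k) * V.choose (k-2) := by
    rw [h2, h3, Finset.sum_insert h4, Nat.choose_self]
    omega
  calc k * v.choose k = v * (v-1).choose (k-1) := by rw [h1]; ring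
    _ ≤ v * (1 + (v-k) * V.choose (k-2)) := Nat.mul_le_mul_left _ h6
    _ = V.choose (k-2) * (v * (v-k)) + v := by ring

/-- For every `k`-uniform hypergraph `H` with `k ≥ 2`:
`m_k(H) ≤ m(H) + C(v(H), k-2)`. -/
theorem mK_le_maxDens_add_choose (k : ℕ) (hk : 2 ≤ k) (H : HG)
    (hH : IsUniform k H) :
    mK k H ≤ maxDens H + ((nV H).choose (k - 2) : ℝ) := by
  
  have hC0 : (0:ℝ) ≤ ((nV H).choose (k - 2) : ℝ) := by positivity
  have hmax0 : 0 ≤ maxDens H := by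
    have h := Finset.le_sup' dens (Finset.empty_mem_powerset H)
    have hd : dens (∅ : HG) = 0 := by simp [HG.dens, nE]
    rw [hd] at h; exact h
  apply Finset.sup'_le
  intro J hJmem
  have hJ : J ⊆ H := Finset.mem_powerset.mp hJmem
  have hdens : dens J ≤ maxDens H := Finset.le_sup' dens hJmem
  unfold dK
  split_ifs with h1 h2
  · obtain ⟨hne, hv⟩ := h1
    have hvJ : vset J ⊆ vset H := Finset.le_iff_subset.mp (Finset.sup_mono hJ)
    have hVv : nV J ≤ nV H := Finset.card_le_card hvJ
    have he : nE J ≤ (nV J).choose k := by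
      have hsub : J ⊆ (vset J).powersetCard k := by
        intro x hx
        rw [Finset.mem_powersetCard]
        exact ⟨Finset.le_sup (f := id) hx, hH x (hJ hx)⟩
      calc nE J = J.card := rfl
        _ ≤ ((vset J).powersetCard k).card := Finset.card_le_card hsub
        _ = (nV J).choose k := by rw [Finset.card_powersetCard]; rfl
    have hkey := keylem k (nV J) (nV H) hk hv hVv
    set v : ℕ := nV J with hvdef
    set e : ℕ := nE J with hedef
    set C : ℝ := ((nV H).choose (k - 2) : ℝ) with hCdef
    have hekN : e * k ≤ (nV H).choose (k-2) * (v * (v-k)) + v :=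
      le_trans (by calc e * k = k * e := Nat.mul_comm _ _
                    _ ≤ k * v.choose k := Nat.mul_le_mul_left _ he) hkey
    have hkv : k ≤ v := by omega
    have hek : (e:ℝ) * k ≤ C * ((v:ℝ) * ((v:ℝ) - k)) + v := by
      have := (Nat.cast_le (α := ℝ)).mpr hekN
      push_cast [Nat.cast_sub hkv] at this
      convert this using 2 <;> push_cast [Nat.cast_sub hkv] <;> ring
    have hv1 : (k:ℝ) + 1 ≤ (v:ℝ) := by exact_mod_cast hv
    have hvk : (0:ℝ) < (v:ℝ) - k := by linarith
    have hk0 : (0:ℝ) < (k:ℝ) := by positivity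
    have hv0 : (0:ℝ) < (v:ℝ) := by linarith
    have hdJ : dens J = (e:ℝ) / v := rfl
    have step : ((e:ℝ) - 1) / ((v:ℝ) - k) ≤ (e:ℝ)/v + C := by
      have hcomb : (e:ℝ)/v + C = ((e:ℝ) + C * v) / v := by field_simp
      rw [hcomb, div_le_div_iff₀ hvk hv0]
      nlinarith [hek]
    have : (e:ℝ)/v ≤ maxDens H := by rw [← hdJ]; exact hdens
    linarith
  · have hdJ : dens J = 1 / (k:ℝ) := by
      simp only [HG.dens, h2.1, h2.2]; norm_num
    rw [hdJ] at hdens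
    linarith
  · linarith
end

section
/- Let G, H₁, H₂ be k-uniform hypergraphs with m(G) < δ_max(H₁) and weak chromatic number χ(H₂) ≥ k+1. Then there is a red/blue colouring of the edges of G with no red copy of H₁ and no blue copy of H₂. -/
open Finset
open scoped Classical

section Aux

open HG

lemma HG.edge_subset_vset {H : HG} {e : Finset ℕ} (he : e ∈ H) : e ⊆ vset H :=
  Finset.le_sup (f := id) he

lemma HG.mem_vset {H : HG} {v : ℕ} : v ∈ vset H ↔ ∃ e ∈ H, v ∈ e := by
  simp [vset, Finset.mem_sup]

lemma HG.image_eq_of_injOn {f : ℕ → ℕ} {s : Set ℕ} (hf : Set.InjOn f s)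
    {a b : Finset ℕ} (ha : ↑a ⊆ s) (hb : ↑b ⊆ s)
    (hab : a.image f = b.image f) : a = b := by
  have key : ∀ (x y : Finset ℕ), ↑x ⊆ s → ↑y ⊆ s → x.image f = y.image f →
      ∀ z ∈ x, z ∈ y := by
    intro x y hx hy hxy z hz
    have : f z ∈ y.image f := hxy ▸ Finset.mem_image_of_mem f hz
    obtain ⟨w, hw, hwz⟩ := Finset.mem_image.mp this
    have : w = z := hf (hy hw) (hx hz) hwz
    exact this ▸ hw
  exact Finset.Subset.antisymm (fun z hz => key a b ha hb hab z hz)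
    (fun z hz => key b a hb ha hab.symm z hz)

/-- Key combinatorial lemma: if every non-empty subgraph `J` of a `k`-uniform
`G` satisfies `e(J) < δ v(J)`, then there is a `k`-colouring of the vertices
such that the monochromatic edges contain no subgraph of minimum degree
at least `δ`. -/
lemma HG.exists_good_colouring (k δ : ℕ) (hk : 0 < k) :
    ∀ (n : ℕ) (G : HG), G.card ≤ n → IsUniform k G →
    (∀ J : HG, J ⊆ G → J.Nonempty → nE J < δ * nV J) →
    ∃ σ : ℕ → Fin k, ∀ J : HG, J ⊆ G →
      (∀ e ∈ J, ∀ u ∈ e, ∀ w ∈ e, σ u = σ w) →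
      (vset J).Nonempty → ∃ v ∈ vset J, deg J v < δ := by
  intro n
  induction n with
  | zero =>
    intro G hcard _ _
    refine ⟨fun _ => ⟨0, hk⟩, ?_⟩
    intro J hJ _ hne
    have : G = ∅ := Finset.card_eq_zero.mp (Nat.le_zero.mp hcard)
    subst this
    have : J = ∅ := Finset.subset_empty.mp hJ
    subst this
    simp [vset] at hne
  | succ n ih =>
    intro G hcard hG hbound
    by_cases hGe : G = ∅
    · subst hGe
      refine ⟨fun _ => ⟨0, hk⟩, ?_⟩
      intro J hJ _ hne
      have : J = ∅ := Finset.subset_empty.mp hJ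
      subst this
      simp [vset] at hne
    -- G is nonempty
    have hGne : G.Nonempty := Finset.nonempty_iff_ne_empty.mpr hGe
    have hvGne : (vset G).Nonempty := by
      obtain ⟨e, he⟩ := hGne
      have hcard : e.card = k := hG e he
      have : e.Nonempty := Finset.card_pos.mp (hcard ▸ hk)
      obtain ⟨x, hx⟩ := this
      exact ⟨x, HG.mem_vset.mpr ⟨e, he, hx⟩⟩
    -- double counting
    have hdc : ∑ v ∈ vset G, deg G v = k * G.card := by
      have h1 : ∑ v ∈ vset G, deg G v = ∑ e ∈ G, e.card := by
        unfold deg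
        simp_rw [Finset.card_filter]
        rw [Finset.sum_comm]
        refine Finset.sum_congr rfl fun e he => ?_
        rw [← Finset.card_filter]
        congr 1
        rw [Finset.filter_mem_eq_inter, Finset.inter_eq_right]
        exact HG.edge_subset_vset he
      rw [h1]
      rw [Finset.sum_congr rfl fun e he => hG e he, Finset.sum_const, smul_eq_mul,
        mul_comm]
    -- a vertex of small degree
    have hsmall : ∃ v ∈ vset G, deg G v < k * δ := by
      by_contra h
      push_neg at h
      have h1 : k * δ * (vset G).card ≤ ∑ v ∈ vset G, deg G v := by
        calc k * δ * (vset G).card = ∑ _v ∈ vset G, k * δ := by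
              rw [Finset.sum_const, smul_eq_mul, mul_comm]
          _ ≤ ∑ v ∈ vset G, deg G v := Finset.sum_le_sum h
      rw [hdc] at h1
      have h2 : δ * (vset G).card ≤ G.card := by
        have := Nat.le_of_mul_le_mul_left (by linarith [h1] : k * (δ * (vset G).card) ≤ k * G.card) hk
        exact this
      have h3 := hbound G (le_refl G) hGne
      unfold nE nV at h3
      omega
    obtain ⟨v₀, hv₀, hdegv₀⟩ := hsmall
    -- split G
    set E₀ : HG := G.filter (fun e => v₀ ∈ e) with hE₀def
    set G' : HG := G.filter (fun e => v₀ ∉ e) with hG'def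
    have hE₀ne : E₀.Nonempty := by
      obtain ⟨e, he, hve⟩ := HG.mem_vset.mp hv₀
      exact ⟨e, Finset.mem_filter.mpr ⟨he, hve⟩⟩
    have hG'card : G'.card ≤ n := by
      have hss : G' ⊂ G := by
        refine Finset.ssubset_iff_of_subset (Finset.filter_subset _ _) |>.mpr ?_
        obtain ⟨e, he⟩ := hE₀ne
        rw [Finset.mem_filter] at he
        exact ⟨e, he.1, by simp [hG'def, he.2]⟩
      have := Finset.card_lt_card hss
      omega
    obtain ⟨σ', hσ'⟩ := ih G' hG'card (fun e he => hG e (Finset.mem_filter.mp he).1)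
      (fun J hJ => hbound J (hJ.trans (Finset.filter_subset _ _)))
    -- choose a colour
    set Danger : Fin k → HG := fun c => E₀.filter (fun e => ∀ u ∈ e, u ≠ v₀ → σ' u = c)
      with hDdef
    have hE₀card : E₀.card = deg G v₀ := rfl
    have hδ : ∃ c : Fin k, (Danger c).card < δ := by
      by_contra h
      push_neg at h
      have hdisj : ∀ c ∈ (Finset.univ : Finset (Fin k)), ∀ c' ∈ Finset.univ,
          c ≠ c' → Disjoint (Danger c) (Danger c') := by
        intro c _ c' _ hne
        rw [Finset.disjoint_left]
        intro e hec hec'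
        rw [hDdef] at hec hec'
        simp only [Finset.mem_filter] at hec hec'
        have hk2 : 2 ≤ k := by
          rcases Nat.lt_or_ge k 2 with h2 | h2
          · exfalso
            apply hne
            have hc := c.isLt
            have hc' := c'.isLt
            exact Fin.ext (by omega)
          · exact h2
        have hecard : e.card = k := hG e (Finset.mem_filter.mp hec.1).1
        have : 1 < e.card := by omega
        obtain ⟨a, ha, b, hb, hab⟩ := Finset.one_lt_card.mp this
        have : ∃ u ∈ e, u ≠ v₀ := by
          rcases eq_or_ne a v₀ with h | h
          · exact ⟨b, hb, by rw [← h]; exact hab.symm⟩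
          · exact ⟨a, ha, h⟩
        obtain ⟨u, hu, huv⟩ := this
        have h1 := hec.2 u hu huv
        have h2 := hec'.2 u hu huv
        exact hne (h1 ▸ h2)
      have h1 : ∑ c : Fin k, (Danger c).card ≤ E₀.card := by
        rw [← Finset.card_biUnion hdisj]
        exact Finset.card_le_card (Finset.biUnion_subset.mpr
          (fun c _ => Finset.filter_subset _ _))
      have h2 : k * δ ≤ ∑ c : Fin k, (Danger c).card := by
        calc k * δ = ∑ _c : Fin k, δ := by
              rw [Finset.sum_const, Finset.card_univ, Fintype.card_fin, smul_eq_mul]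
          _ ≤ ∑ c : Fin k, (Danger c).card := Finset.sum_le_sum (fun c _ => h c)
      rw [hE₀card] at h1
      omega
    obtain ⟨c, hc⟩ := hδ
    refine ⟨Function.update σ' v₀ c, ?_⟩
    intro J hJG hmono hne
    by_cases hvJ : v₀ ∈ vset J
    · refine ⟨v₀, hvJ, ?_⟩
      have hsub : J.filter (fun e => v₀ ∈ e) ⊆ Danger c := by
        intro e he
        rw [Finset.mem_filter] at he
        rw [hDdef, Finset.mem_filter]
        refine ⟨Finset.mem_filter.mpr ⟨hJG he.1, he.2⟩, ?_⟩
        intro u hu huv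
        have h1 := hmono e he.1 u hu v₀ he.2
        rwa [Function.update_of_ne huv, Function.update_self] at h1
      calc deg J v₀ = (J.filter (fun e => v₀ ∈ e)).card := rfl
        _ ≤ (Danger c).card := Finset.card_le_card hsub
        _ < δ := hc
    · have hJG' : J ⊆ G' := by
        intro e he
        rw [hG'def, Finset.mem_filter]
        refine ⟨hJG he, fun hv => hvJ (HG.mem_vset.mpr ⟨e, he, hv⟩)⟩
      refine hσ' J hJG' ?_ hne
      intro e he u hu w hw
      have hu' : u ≠ v₀ := fun h => hvJ (HG.mem_vset.mpr ⟨e, he, h ▸ hu⟩)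
      have hw' : w ≠ v₀ := fun h => hvJ (HG.mem_vset.mpr ⟨e, he, h ▸ hw⟩)
      have := hmono e he u hu w hw
      rwa [Function.update_of_ne hu', Function.update_of_ne hw'] at this

end Aux

open HG
/-- The weak chromatic number of a hypergraph: the least `t` such that the
vertices can be `t`-coloured with no monochromatic edge. -/
noncomputable def weakChrom (H : HG) : ℕ :=
  sInf {t : ℕ | ∃ c : ℕ → Fin t, ∀ e ∈ H, ∃ u ∈ e, ∃ v ∈ e, c u ≠ c v}

/-- If `m(G) < δ_max(H₁)` and the weak chromatic number of `H₂` is at least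
`k+1`, then there is a red/blue edge colouring of `G` with no red copy of
`H₁` and no blue copy of `H₂`. -/
theorem no_arrow_of_maxDens_lt_and_chrom (k : ℕ) (G H1 H2 : HG)
    (hG : IsUniform k G) (hH1 : IsUniform k H1) (hH2 : IsUniform k H2)
    (hm : maxDens G < (maxMinDeg H1 : ℝ)) (hchrom : k + 1 ≤ weakChrom H2) :
    ∃ c : Finset ℕ → Bool,
      (¬ ∃ K : HG, IsCopy H1 K ∧ K ⊆ G ∧ ∀ e ∈ K, c e = true) ∧
      (¬ ∃ K : HG, IsCopy H2 K ∧ K ⊆ G ∧ ∀ e ∈ K, c e = false) := by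
  classical
  have hmaxDens_nonneg : (0:ℝ) ≤ maxDens G := by
    have h0 : dens (∅ : HG) ≤ maxDens G :=
      Finset.le_sup' dens (Finset.empty_mem_powerset G)
    have : dens (∅ : HG) = 0 := by simp [HG.dens, HG.nE]
    linarith
  rcases Nat.eq_zero_or_pos k with hk0 | hk
  · exfalso
    subst hk0
    have h1 : maxMinDeg H1 = 0 := by
      apply Nat.le_zero.mp
      apply Finset.sup_le
      intro H' hH'
      have hvset : vset H' = ∅ := by
        rw [Finset.eq_empty_iff_forall_notMem]
        intro x hx
        obtain ⟨e, he, hxe⟩ := HG.mem_vset.mp hx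
        have : e.card = 0 := hH1 e (Finset.mem_powerset.mp hH' he)
        rw [Finset.card_eq_zero] at this
        subst this
        exact absurd hxe (Finset.notMem_empty x)
      unfold minDeg
      rw [dif_neg (by simp [hvset])]
    rw [h1] at hm
    norm_num at hm
    linarith
  · set δ := maxMinDeg H1 with hδdef
    have hδpos : 0 < δ := by
      by_contra h
      push_neg at h
      interval_cases δ
      · norm_num at hm; linarith
    have hbound : ∀ J : HG, J ⊆ G → J.Nonempty → nE J < δ * nV J := by
      intro J hJ hne
      have h1 : HG.dens J ≤ maxDens G := Finset.le_sup' HG.dens (Finset.mem_powerset.mpr hJ)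
      have h2 : dens J < (δ : ℝ) := lt_of_le_of_lt h1 hm
      have hv : 0 < nV J := by
        obtain ⟨e, he⟩ := hne
        have : e.card = k := hG e (hJ he)
        obtain ⟨x, hx⟩ := Finset.card_pos.mp (this ▸ hk)
        exact Finset.card_pos.mpr ⟨x, HG.mem_vset.mpr ⟨e, he, hx⟩⟩
      rw [HG.dens, div_lt_iff₀ (by exact_mod_cast hv)] at h2
      exact_mod_cast h2
    obtain ⟨σ, hσ⟩ := HG.exists_good_colouring k δ hk G.card G (le_refl _) hG hbound
    refine ⟨fun e => decide (∀ u ∈ e, ∀ w ∈ e, σ u = σ w), ?_, ?_⟩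
    · rintro ⟨K, ⟨f, hf, hK⟩, hKG, hred⟩
      obtain ⟨H', hH'mem, hH'⟩ := Finset.exists_mem_eq_sup H1.powerset
        ⟨∅, Finset.empty_mem_powerset H1⟩ minDeg
      have hH'sub : H' ⊆ H1 := Finset.mem_powerset.mp hH'mem
      have hδ' : δ = minDeg H' := hH'
      have hvH' : (vset H').Nonempty := by
        by_contra h
        unfold minDeg at hδ'
        rw [dif_neg h] at hδ'
        omega
      have hmin : ∀ v ∈ vset H', δ ≤ deg H' v := by
        intro v hv
        rw [hδ']
        unfold minDeg
        rw [dif_pos hvH']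
        exact Finset.inf'_le _ hv
      set J : HG := H'.image (fun e => e.image f) with hJdef
      have hJK : J ⊆ K := by rw [hK]; exact Finset.image_subset_image hH'sub
      have hJG : J ⊆ G := hJK.trans hKG
      have hmono : ∀ e ∈ J, ∀ u ∈ e, ∀ w ∈ e, σ u = σ w := by
        intro e he
        have := hred e (hJK he)
        simpa using this
      have hvJ : (vset J).Nonempty := by
        obtain ⟨v, hv⟩ := hvH'
        obtain ⟨e, he, hve⟩ := HG.mem_vset.mp hv
        exact ⟨f v, HG.mem_vset.mpr ⟨e.image f, Finset.mem_image_of_mem _ he,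
          Finset.mem_image_of_mem f hve⟩⟩
      obtain ⟨w, hw, hdeg⟩ := hσ J hJG hmono hvJ
      obtain ⟨e', he'J, hwe'⟩ := HG.mem_vset.mp hw
      obtain ⟨e, heH', he'⟩ := Finset.mem_image.mp he'J
      rw [← he'] at hwe'
      obtain ⟨v, hve, hfv⟩ := Finset.mem_image.mp hwe'
      have hvv : v ∈ vset H' := HG.mem_vset.mpr ⟨e, heH', hve⟩
      have hsub' : vset H' ⊆ vset H1 := Finset.le_iff_subset.mp (Finset.sup_mono hH'sub)
      have hvset_sub : (vset H' : Set ℕ) ⊆ (vset H1 : Set ℕ) := by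
        intro x hx
        exact Finset.mem_coe.mpr (hsub' (Finset.mem_coe.mp hx))
      have hdegle : deg H' v ≤ deg J w := by
        rw [← hfv]
        apply Finset.card_le_card_of_injOn (fun e => e.image f)
        · intro a ha
          simp only [Finset.coe_filter, Set.mem_setOf_eq] at ha ⊢
          exact ⟨Finset.mem_image_of_mem _ ha.1, Finset.mem_image_of_mem f ha.2⟩
        · intro a ha b hb hab
          simp only [Finset.coe_filter, Set.mem_setOf_eq] at ha hb
          exact HG.image_eq_of_injOn hf
            ((Finset.coe_subset.mpr (HG.edge_subset_vset ha.1)).trans hvset_sub)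
            ((Finset.coe_subset.mpr (HG.edge_subset_vset hb.1)).trans hvset_sub) hab
      have := hmin v hvv
      omega
    · rintro ⟨K, ⟨f, hf, hK⟩, hKG, hblue⟩
      have hmem : k ∈ {t : ℕ | ∃ c : ℕ → Fin t, ∀ e ∈ H2, ∃ u ∈ e, ∃ v ∈ e, c u ≠ c v} := by
        refine ⟨fun x => σ (f x), ?_⟩
        intro e he
        have heK : e.image f ∈ K := hK ▸ Finset.mem_image_of_mem _ he
        have hb := hblue _ heK
        simp only [decide_eq_false_iff_not] at hb
        push_neg at hb
        obtain ⟨u', hu', w', hw', hne⟩ := hb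
        obtain ⟨u, hue, hfu⟩ := Finset.mem_image.mp hu'
        obtain ⟨w, hwe, hfw⟩ := Finset.mem_image.mp hw'
        exact ⟨u, hue, w, hwe, by show σ (f u) ≠ σ (f w); rw [hfu, hfw]; exact hne⟩
      have hle : weakChrom H2 ≤ k := Nat.sInf_le hmem
      omega
end

section
/- Let k ≥ 2 and let H₂ be a strictly k-balanced k-uniform hypergraph with m_k(H₂) > 1. Then V(H₂) contains no cut set C of size at most k-1 admitting subhypergraphs J₁, J₂ ⊊ H₂ with e(J₁) ≥ 1, e(J₂) ≥ 2, E(J₁) ∩ E(J₂) = ∅, E(J₁) ∪ E(J₂) = E(H₂), and V(J₁) ∩ V(J₂) ⊆ C. -/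
open Finset
open scoped Classical

open HG
/-- A strictly `k`-balanced `k`-uniform hypergraph `H₂` with `m_k(H₂) > 1`
admits no cut set `C` of size at most `k-1` together with subhypergraphs
`J₁, J₂ ⊊ H₂` with `e(J₁) ≥ 1`, `e(J₂) ≥ 2`, disjoint edge sets covering
`E(H₂)`, and `V(J₁) ∩ V(J₂) ⊆ C`. -/
theorem strictly_balanced_no_small_cut (k : ℕ) (hk : 2 ≤ k) (H2 : HG)
    (hu : IsUniform k H2) (hb : StrictBal k H2) (hm : 1 < mK k H2) :
    ¬ ∃ C : Finset ℕ, C ⊆ vset H2 ∧ C.card ≤ k - 1 ∧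
      ∃ J1 J2 : HG, J1 ⊂ H2 ∧ J2 ⊂ H2 ∧
        1 ≤ nE J1 ∧ 2 ≤ nE J2 ∧ J1 ∩ J2 = ∅ ∧ J1 ∪ J2 = H2 ∧
        vset J1 ∩ vset J2 ⊆ C := by
  rintro ⟨C, hCsub, hCcard, J1, J2, hJ1, hJ2, he1, he2, hdisj, hunion, hVC⟩
  have edge_sub : ∀ {J : HG} {a : Finset ℕ}, a ∈ J → a ⊆ vset J := by
    intro J a ha; exact Finset.le_sup (f := id) ha
  have vmono : ∀ {J J' : HG}, J ⊆ J' → vset J ⊆ vset J' := by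
    intro J J' h
    show J.sup id ≤ J'.sup id
    exact Finset.sup_mono h
  -- m_k is attained at H2 itself
  have hmeq : dK k H2 = mK k H2 := by
    obtain ⟨J, hJmem, hJeq⟩ :=
      Finset.exists_mem_eq_sup' (s := H2.powerset)
        ⟨∅, Finset.empty_mem_powerset H2⟩ (dK k)
    have hJeq' : mK k H2 = dK k J := hJeq
    rcases eq_or_ne J H2 with rfl | hne
    · exact hJeq'.symm
    · have hJss : J ⊂ H2 := (Finset.mem_powerset.mp hJmem).ssubset_of_ne hne
      have h := hb J hJss
      rw [hJeq'] at h
      exact absurd h (lt_irrefl _)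
  set m := mK k H2 with hmdef
  have hm0 : (0:ℝ) < m := lt_trans one_pos hm
  -- edges add up
  have hEadd : nE H2 = nE J1 + nE J2 := by
    have h := Finset.card_inter_add_card_union J1 J2
    rw [hdisj] at h
    simp only [Finset.card_empty] at h
    have h2 : nE H2 = (J1 ∪ J2).card := by rw [← hunion]; rfl
    have h3 : nE J1 = J1.card := rfl
    have h4 : nE J2 = J2.card := rfl
    omega
  have hJ1ne : J1.Nonempty := Finset.card_pos.mp he1
  have hJ2ne : J2.Nonempty := Finset.card_pos.mp (by
    have : nE J2 = J2.card := rfl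
    omega)
  have hH2ne : H2.Nonempty := hJ2ne.mono hJ2.subset
  -- nV J1 ≥ k
  have hvJ1 : k ≤ nV J1 := by
    obtain ⟨a, ha⟩ := hJ1ne
    have hka : a.card = k := hu a (hJ1.subset ha)
    calc k = a.card := hka.symm
      _ ≤ nV J1 := Finset.card_le_card (edge_sub ha)
  -- nV J2 ≥ k+1
  have hvJ2 : k + 1 ≤ nV J2 := by
    obtain ⟨a, ha, b, hb', hab⟩ := Finset.one_lt_card.mp he2
    have hka : a.card = k := hu a (hJ2.subset ha)
    have hkb : b.card = k := hu b (hJ2.subset hb')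
    have hsub : a ∪ b ⊆ vset J2 := Finset.union_subset (edge_sub ha) (edge_sub hb')
    have hlt : k < (a ∪ b).card := by
      have hle : a.card ≤ (a ∪ b).card :=
        Finset.card_le_card Finset.subset_union_left
      rcases eq_or_lt_of_le hle with h | h
      · exfalso
        have heq2 : a = a ∪ b :=
          Finset.eq_of_subset_of_card_le Finset.subset_union_left h.ge
        have : b ⊆ a := heq2 ▸ Finset.subset_union_right
        exact hab (Finset.eq_of_subset_of_card_le this (by rw [hka, hkb])).symm
      · omega
    calc k + 1 ≤ (a ∪ b).card := hlt
      _ ≤ nV J2 := Finset.card_le_card hsub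
  have hvH2 : k + 1 ≤ nV H2 :=
    le_trans hvJ2 (Finset.card_le_card (vmono hJ2.subset))
  -- vertex count
  have hVadd : nV J1 + nV J2 ≤ nV H2 + (k - 1) := by
    have hvu : vset H2 = vset J1 ∪ vset J2 := by
      rw [← hunion, vset, vset, vset, Finset.sup_union, Finset.sup_eq_union]
    have h1 := Finset.card_union_add_card_inter (vset J1) (vset J2)
    have h2 : (vset J1 ∩ vset J2).card ≤ k - 1 :=
      le_trans (Finset.card_le_card hVC) hCcard
    have h3 : nV H2 = (vset J1 ∪ vset J2).card := by rw [nV, hvu]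
    have h4 : nV J1 = (vset J1).card := rfl
    have h5 : nV J2 = (vset J2).card := rfl
    omega
  -- the key real inequalities
  have hvH2R : (k:ℝ) < (nV H2 : ℝ) := by exact_mod_cast hvH2
  have hvJ2R : (k:ℝ) < (nV J2 : ℝ) := by exact_mod_cast hvJ2
  have hA : (nE H2 : ℝ) - 1 = m * ((nV H2 : ℝ) - k) := by
    rw [dK, if_pos ⟨hH2ne, hvH2⟩] at hmeq
    have hne0 : (nV H2 : ℝ) - k ≠ 0 := by linarith
    rw [div_eq_iff hne0] at hmeq
    linarith
  have hD : (nE J2 : ℝ) - 1 < m * ((nV J2 : ℝ) - k) := by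
    have h := hb J2 hJ2
    rw [dK, if_pos ⟨hJ2ne, hvJ2⟩, ← hmdef, div_lt_iff₀ (by linarith)] at h
    linarith
  have hE1 : (nE J1 : ℝ) - 1 ≤ m * ((nV J1 : ℝ) - k) := by
    rcases lt_or_eq_of_le hvJ1 with hlt | heq
    · have hv1R : (k:ℝ) < (nV J1 : ℝ) := by exact_mod_cast hlt
      have h := hb J1 hJ1
      rw [dK, if_pos ⟨hJ1ne, hlt⟩, ← hmdef, div_lt_iff₀ (by linarith)] at h
      linarith
    · -- nV J1 = k : single edge
      have hone : nE J1 ≤ 1 := by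
        have hsub : J1 ⊆ {vset J1} := by
          intro a ha
          have hka : a.card = k := hu a (hJ1.subset ha)
          have hvc : (vset J1).card = k := heq.symm
          have hav : a = vset J1 :=
            Finset.eq_of_subset_of_card_le (edge_sub ha) (by omega)
          simp [hav]
        calc nE J1 = J1.card := rfl
          _ ≤ ({vset J1} : Finset (Finset ℕ)).card := Finset.card_le_card hsub
          _ = 1 := Finset.card_singleton _
      have he1' : nE J1 = 1 := le_antisymm hone he1
      have hvR : (nV J1 : ℝ) = (k:ℝ) := by exact_mod_cast heq.symm
      rw [he1', hvR]
      simp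
  have hEaddR : (nE H2 : ℝ) = (nE J1 : ℝ) + (nE J2 : ℝ) := by exact_mod_cast hEadd
  have hVaddR : (nV J1 : ℝ) + (nV J2 : ℝ) ≤ (nV H2 : ℝ) + ((k:ℝ) - 1) := by
    have hk1 : 1 ≤ k := by omega
    have h2 : ((nV J1 + nV J2 : ℕ) : ℝ) ≤ ((nV H2 + (k - 1) : ℕ) : ℝ) :=
      Nat.cast_le.mpr hVadd
    push_cast [Nat.cast_sub hk1] at h2
    linarith
  have key : m * (((nV J1 : ℝ) - k) + ((nV J2 : ℝ) - k)) ≤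
      m * (((nV H2 : ℝ) - k) - 1) := by
    apply mul_le_mul_of_nonneg_left _ hm0.le
    linarith
  have e1 : m * (((nV J1 : ℝ) - k) + ((nV J2 : ℝ) - k)) =
      m * ((nV J1 : ℝ) - k) + m * ((nV J2 : ℝ) - k) := by ring
  have e2 : m * (((nV H2 : ℝ) - k) - 1) = m * ((nV H2 : ℝ) - k) - m := by ring
  linarith
end

section
/- Let k ≥ 2 and let H₁, H₂ be k-uniform hypergraphs with m_k(H₁) > m_k(H₂) > 1, where H₁ is strictly balanced with respect to d_k(·, H₂). Then every vertex of H₁ has degree at least 2. -/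
open Finset
open scoped Classical

open HG

lemma vset_card_ge_of_uniform (k : ℕ) (H : HG) (hu : IsUniform k H)
    (hne : H.Nonempty) : k ≤ nV H := by
  obtain ⟨e, he⟩ := hne
  have hsub : e ⊆ vset H := by
    intro x hx
    simp only [vset, Finset.mem_sup]
    exact ⟨e, he, hx⟩
  calc k = e.card := (hu e he).symm
    _ ≤ (vset H).card := Finset.card_le_card hsub

/-- If `m_k(H₁) > m_k(H₂) > 1` and `H₁` is strictly balanced with respect to
`d_k(·, H₂)`, then every vertex of `H₁` has degree at least `2`. -/
theorem strictly_balanced_wrt_min_degree_two (k : ℕ) (hk : 2 ≤ k)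
    (H1 H2 : HG) (hu1 : IsUniform k H1) (hu2 : IsUniform k H2)
    (h12 : mK k H2 < mK k H1) (h2 : 1 < mK k H2)
    (hb : StrictBalWrt k H1 H2) :
    ∀ v ∈ vset H1, 2 ≤ deg H1 v := by
  -- abbreviations
  have hk0 : (0:ℝ) < (k:ℝ) := by positivity
  -- H2 is nonempty
  have hH2 : H2.Nonempty := by
    by_contra h
    rw [Finset.not_nonempty_iff_eq_empty] at h
    subst h
    have : mK k (∅ : HG) = dK k ∅ := by
      simp [mK, Finset.powerset_empty]
    rw [this] at h2
    have : dK k (∅ : HG) = 0 := by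
      simp [dK, nE]
    rw [this] at h2
    linarith
  set m := mK k H2 with hm
  have hmpos : (0:ℝ) < 1 / m := by
    apply div_pos one_pos; linarith
  have hmlt : 1 / m < 1 := by
    rw [div_lt_one (by linarith)]; exact h2
  -- m_k(H1) is attained at some J0 with dK k J0 > 1, which gives mKK > 1
  have hmK1 : 1 < mK k H1 := lt_trans h2 h12
  obtain ⟨J0, hJ0mem, hJ0⟩ :=
    Finset.exists_mem_eq_sup' (⟨∅, Finset.empty_mem_powerset H1⟩ :
      H1.powerset.Nonempty) (dK k)
  have hJ0' : mK k H1 = dK k J0 := hJ0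
  rw [hJ0'] at hmK1
  have hJ0sub : J0 ⊆ H1 := Finset.mem_powerset.mp hJ0mem
  -- show 1 < mKK k H1 H2
  have hmKK1 : 1 < mKK k H1 H2 := by
    have hd : 1 < dKK k J0 H2 := by
      rw [dK] at hmK1
      split_ifs at hmK1 with hc1 hc2
      · -- main case
        obtain ⟨hJ0ne, hJ0V⟩ := hc1
        have hVk1 : (k:ℝ) + 1 ≤ (nV J0 : ℝ) := by exact_mod_cast hJ0V
        have hden : (0:ℝ) < (nV J0 : ℝ) - k := by linarith
        have hnum : (nV J0 : ℝ) - k < (nE J0 : ℝ) - 1 := by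
          rw [lt_div_iff₀ hden] at hmK1; linarith
        rw [dKK, if_pos ⟨hH2, by omega⟩]
        rw [lt_div_iff₀ (by linarith)]
        linarith
      · exfalso
        have : 1 / (k:ℝ) ≤ 1 / 2 := by
          apply one_div_le_one_div_of_le (by norm_num)
          exact_mod_cast hk
        linarith
      · exfalso; linarith
    calc (1:ℝ) < dKK k J0 H2 := hd
      _ ≤ mKK k H1 H2 := Finset.le_sup' (fun J => dKK k J H2) hJ0mem
  -- mKK is attained only at H1 itself
  have hmKKeq : mKK k H1 H2 = dKK k H1 H2 := by
    obtain ⟨Jm, hJmmem, hJm⟩ :=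
      Finset.exists_mem_eq_sup' (⟨∅, Finset.empty_mem_powerset H1⟩ :
        H1.powerset.Nonempty) (fun J => dKK k J H2)
    by_cases hJmeq : Jm = H1
    · rw [hJmeq] at hJm
      exact hJm
    · exfalso
      have : Jm ⊂ H1 := (Finset.mem_powerset.mp hJmmem).ssubset_of_ne hJmeq
      have := hb Jm this
      have hJm' : mKK k H1 H2 = dKK k Jm H2 := hJm
      rw [← hJm'] at this
      exact lt_irrefl _ this
  -- extract the formula for dKK H1
  rw [hmKKeq] at hmKK1
  have hcond : H2.Nonempty ∧ k ≤ nV H1 := by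
    by_contra hc
    rw [dKK, if_neg hc] at hmKK1; linarith
  rw [dKK, if_pos hcond] at hmKK1
  have hVkH1 : (k:ℝ) ≤ (nV H1 : ℝ) := by exact_mod_cast hcond.2
  have hd2pos : (0:ℝ) < (nV H1 : ℝ) - k + 1 / m := by linarith
  have hE : (nV H1 : ℝ) - k + 1 / m < (nE H1 : ℝ) := by
    rw [lt_div_iff₀ hd2pos] at hmKK1; linarith
  -- main argument
  intro v hv
  by_contra hdeg
  push_neg at hdeg
  obtain ⟨e, heH, hve⟩ : ∃ e ∈ H1, v ∈ e := by
    simpa [vset, Finset.mem_sup] using hv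
  have hefil : e ∈ H1.filter (fun f => v ∈ f) := Finset.mem_filter.mpr ⟨heH, hve⟩
  have hcard1 : (H1.filter (fun f => v ∈ f)).card = 1 := by
    have h1 : 1 ≤ (H1.filter (fun f => v ∈ f)).card :=
      Finset.card_pos.mpr ⟨e, hefil⟩
    have h2' : (H1.filter (fun f => v ∈ f)).card < 2 := hdeg
    omega
  have hfil : H1.filter (fun f => v ∈ f) = {e} := by
    obtain ⟨a, ha⟩ := Finset.card_eq_one.mp hcard1
    rw [ha] at hefil ⊢
    rw [Finset.mem_singleton] at hefil
    rw [hefil]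
  have honly : ∀ f ∈ H1, v ∈ f → f = e := by
    intro f hf hvf
    have : f ∈ H1.filter (fun g => v ∈ g) := Finset.mem_filter.mpr ⟨hf, hvf⟩
    rw [hfil, Finset.mem_singleton] at this
    exact this
  -- H1 has at least 2 edges
  have hE2 : 2 ≤ H1.card := by
    by_contra hc
    push_neg at hc
    have : mK k H1 ≤ 1 / 2 := by
      apply Finset.sup'_le
      intro J hJ
      have hJsub : J ⊆ H1 := Finset.mem_powerset.mp hJ
      have hJcard : J.card ≤ 1 := le_trans (Finset.card_le_card hJsub) (by omega)
      rw [dK]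
      split_ifs with hc1 hc2
      · have : nE J = 1 := by
          have := Finset.card_pos.mpr hc1.1
          simp only [nE] at *; omega
        rw [this]
        norm_num
      · apply one_div_le_one_div_of_le (by norm_num)
        exact_mod_cast hk
      · norm_num
    have h12' := lt_trans h2 h12
    linarith
  set J : HG := H1.erase e with hJdef
  have hJss : J ⊂ H1 := Finset.erase_ssubset heH
  have hJne : J.Nonempty := by
    rw [← Finset.card_pos, hJdef, Finset.card_erase_of_mem heH]
    omega
  have hJuni : IsUniform k J := fun f hf => hu1 f (hJss.subset hf)
  have hJVk : k ≤ nV J := vset_card_ge_of_uniform k J hJuni hJne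
  -- vset J ⊆ (vset H1).erase v
  have hvsub : vset J ⊆ (vset H1).erase v := by
    intro u hu
    simp only [vset, Finset.mem_sup, id] at hu
    obtain ⟨f, hfJ, huf⟩ := hu
    have hfH : f ∈ H1 := hJss.subset hfJ
    have hfne : f ≠ e := (Finset.mem_erase.mp hfJ).1
    rw [Finset.mem_erase]
    constructor
    · intro huv
      exact hfne (honly f hfH (huv ▸ huf))
    · simp only [vset, Finset.mem_sup, id]
      exact ⟨f, hfH, huf⟩
  have hvH1 : v ∈ vset H1 := hv
  have hnVJ : nV J ≤ nV H1 - 1 := by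
    have := Finset.card_le_card hvsub
    rw [Finset.card_erase_of_mem hvH1] at this
    exact this
  have hnV1pos : 1 ≤ nV H1 := Finset.card_pos.mpr ⟨v, hvH1⟩
  have hnVJR : (nV J : ℝ) ≤ (nV H1 : ℝ) - 1 := by
    have : (nV J : ℝ) ≤ ((nV H1 - 1 : ℕ) : ℝ) := by exact_mod_cast hnVJ
    rwa [Nat.cast_sub hnV1pos, Nat.cast_one] at this
  have hnEJ : (nE J : ℝ) = (nE H1 : ℝ) - 1 := by
    have : nE J = nE H1 - 1 := by
      simp only [nE, hJdef, Finset.card_erase_of_mem heH]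
    rw [this, Nat.cast_sub (by simp only [nE]; omega), Nat.cast_one]
  have hVJR : (k:ℝ) ≤ (nV J : ℝ) := by exact_mod_cast hJVk
  -- compute dKK k J H2
  have hdKKJ : dKK k J H2 = ((nE H1 : ℝ) - 1) / ((nV J : ℝ) - k + 1 / m) := by
    rw [dKK, if_pos ⟨hH2, hJVk⟩, hnEJ]
  have hd1pos : (0:ℝ) < (nV J : ℝ) - k + 1 / m := by linarith
  -- dKK J > mKK H1 H2, contradiction
  have hlt := hb J hJss
  rw [hdKKJ, hmKKeq, dKK, if_pos hcond, ← hm] at hlt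
  rw [div_lt_div_iff₀ hd1pos hd2pos] at hlt
  nlinarith [mul_le_mul_of_nonneg_left
    (show (1:ℝ) ≤ ((nV H1 : ℝ) - k + 1/m) - ((nV J : ℝ) - k + 1/m) by linarith)
    (show (0:ℝ) ≤ (nE H1 : ℝ) by positivity)]
end

section
/- Let H₁, H₂ be graphs with minimum degrees δ₁, δ₂, set x = δ₁ + δ₂ - 1 and z = max{z(H₁), z(H₂)}, where z(H) = 0 if H has two adjacent vertices of minimum degree, and otherwise z(H) is the maximum t such that the vertices of degree at most δ(H) - 1 + t form an independent set. Let A be a graph in which every edge e is the unique edge-intersection of some copy of H₂ and some copy of H₁ (i.e., A ∈ C(H₁,H₂)). Then d(A) = e(A)/v(A) ≥ x(x+z)/(2x+z). -/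
open Finset
open scoped Classical

open HG
/-- `G ∈ C(H₁,H₂)`: every edge of `G` is the unique edge-intersection of some
copy of `H₂` and some copy of `H₁` inside `G`. -/
def InC (H1 H2 G : HG) : Prop :=
  ∀ e ∈ G, ∃ L R : HG, IsCopy H2 L ∧ L ⊆ G ∧ IsCopy H1 R ∧ R ⊆ G ∧
    L ∩ R = {e}

/-- The parameter `z(H)`: `0` if two vertices of minimum degree are adjacent;
otherwise the maximum `t` such that the vertices of degree at most
`δ(H) - 1 + t` form an independent set. -/
noncomputable def zpar (H : HG) : ℕ :=
  if ∃ e ∈ H, ∀ v ∈ e, deg H v = minDeg H then 0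
  else sSup {t : ℕ | ∀ e ∈ H,
    ¬ e ⊆ (vset H).filter (fun v => deg H v ≤ minDeg H - 1 + t)}

namespace HG

lemma subset_vset {H : HG} {e : Finset ℕ} (he : e ∈ H) : e ⊆ vset H :=
  Finset.le_sup (f := id) he

lemma mem_vset_s16 {H : HG} {v : ℕ} : v ∈ vset H ↔ ∃ e ∈ H, v ∈ e := by
  simp [vset, Finset.mem_sup]

lemma one_le_deg {H : HG} {v : ℕ} {e : Finset ℕ} (he : e ∈ H) (hv : v ∈ e) :
    1 ≤ deg H v := by
  have : e ∈ H.filter (fun e => v ∈ e) := Finset.mem_filter.2 ⟨he, hv⟩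
  exact Finset.card_pos.2 ⟨e, this⟩

lemma minDeg_le {H : HG} {v : ℕ} (hv : v ∈ vset H) : minDeg H ≤ deg H v := by
  rw [minDeg, dif_pos ⟨v, hv⟩]
  exact Finset.inf'_le _ hv

lemma one_le_minDeg {H : HG} (hne : H.Nonempty) (hu : IsUniform 2 H) :
    1 ≤ minDeg H := by
  obtain ⟨e, he⟩ := hne
  have hec : e.card = 2 := hu e he
  obtain ⟨v, hv⟩ : e.Nonempty := Finset.card_pos.1 (by omega)
  have hvs : (vset H).Nonempty := ⟨v, subset_vset he hv⟩
  rw [minDeg, dif_pos hvs]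
  apply Finset.le_inf'
  intro w hw
  obtain ⟨e', he', hwe'⟩ := mem_vset_s16.1 hw
  exact one_le_deg he' hwe'

lemma deg_le_card (H : HG) (v : ℕ) : deg H v ≤ H.card := Finset.card_filter_le _ _

lemma mem_image_edge {H : HG} {f : ℕ → ℕ} (hf : Set.InjOn f (vset H))
    {e : Finset ℕ} (he : e ∈ H) {u : ℕ} (hu : u ∈ vset H) :
    f u ∈ e.image f ↔ u ∈ e := by
  constructor
  · intro h
    obtain ⟨b, hb, hfb⟩ := Finset.mem_image.1 h
    rwa [hf (subset_vset he hb) hu hfb] at hb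
  · exact Finset.mem_image_of_mem f

lemma edge_image_inj {H : HG} {f : ℕ → ℕ} (hf : Set.InjOn f (vset H)) :
    Set.InjOn (fun e : Finset ℕ => e.image f) H := by
  intro e he e' he' h
  simp only at h
  ext a
  constructor
  · intro ha
    have h1 : f a ∈ e'.image f := h ▸ Finset.mem_image_of_mem f ha
    exact (mem_image_edge hf he' (subset_vset he ha)).1 h1
  · intro ha
    have h1 : f a ∈ e.image f := h ▸ Finset.mem_image_of_mem f ha
    exact (mem_image_edge hf he (subset_vset he' ha)).1 h1

lemma deg_image {H : HG} {f : ℕ → ℕ} (hf : Set.InjOn f (vset H))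
    {u : ℕ} (hu : u ∈ vset H) :
    deg (H.image (fun e => e.image f)) (f u) = deg H u := by
  rw [deg, deg]
  have hset : (H.image (fun e => e.image f)).filter (fun s => f u ∈ s)
      = (H.filter (fun e => u ∈ e)).image (fun e => e.image f) := by
    ext s
    simp only [Finset.mem_filter, Finset.mem_image]
    constructor
    · rintro ⟨⟨e, he, rfl⟩, hus⟩
      exact ⟨e, ⟨he, (mem_image_edge hf he hu).1 hus⟩, rfl⟩
    · rintro ⟨e, ⟨he, hue⟩, rfl⟩
      exact ⟨⟨e, he, rfl⟩, Finset.mem_image_of_mem f hue⟩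
  rw [hset, Finset.card_image_of_injOn
    ((edge_image_inj hf).mono (Finset.coe_subset.2 (Finset.filter_subset _ _)))]

lemma vset_image {H : HG} {f : ℕ → ℕ} :
    vset (H.image (fun e => e.image f)) = (vset H).image f := by
  ext a
  simp only [mem_vset_s16, Finset.mem_image]
  constructor
  · rintro ⟨e, ⟨e0, he0, rfl⟩, ha⟩
    obtain ⟨b, hb, rfl⟩ := Finset.mem_image.1 ha
    exact ⟨b, ⟨e0, he0, hb⟩, rfl⟩
  · rintro ⟨b, ⟨e0, he0, hbe0⟩, rfl⟩
    exact ⟨e0.image f, ⟨e0, he0, rfl⟩, Finset.mem_image_of_mem f hbe0⟩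

lemma minDeg_le_deg_copy {H K : HG} (hc : IsCopy H K) {v : ℕ} (hv : v ∈ vset K) :
    minDeg H ≤ deg K v := by
  obtain ⟨f, hf, rfl⟩ := hc
  rw [vset_image] at hv
  obtain ⟨u, hu, rfl⟩ := Finset.mem_image.1 hv
  rw [deg_image hf hu]
  exact minDeg_le hu

lemma exists_high_deg {H K : HG} (hH : IsUniform 2 H) (hc : IsCopy H K)
    {e : Finset ℕ} (he : e ∈ K) :
    ∃ v ∈ e, minDeg H + zpar H ≤ deg K v := by
  obtain ⟨f, hf, rfl⟩ := hc
  obtain ⟨e0, he0, rfl⟩ := Finset.mem_image.1 he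
  have hne : H.Nonempty := ⟨e0, he0⟩
  have hd : 1 ≤ minDeg H := one_le_minDeg hne hH
  rw [zpar]
  split_ifs with hcase
  · obtain ⟨v, hv⟩ : e0.Nonempty := Finset.card_pos.1 (by rw [hH e0 he0]; norm_num)
    refine ⟨f v, Finset.mem_image_of_mem f hv, ?_⟩
    rw [deg_image hf (subset_vset he0 hv)]
    simpa using minDeg_le (subset_vset he0 hv)
  · set S := {t : ℕ | ∀ e' ∈ H,
      ¬ e' ⊆ (vset H).filter (fun v => deg H v ≤ minDeg H - 1 + t)} with hS
    have h0 : 0 ∈ S := by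
      intro e' he' hsub
      obtain ⟨w, hw⟩ : e'.Nonempty := Finset.card_pos.1 (by rw [hH e' he']; norm_num)
      have h1 := (Finset.mem_filter.1 (hsub hw)).2
      have h2 : minDeg H ≤ deg H w := minDeg_le (subset_vset he' hw)
      omega
    have hbdd : BddAbove S := by
      refine ⟨H.card, fun t ht => ?_⟩
      by_contra hlt
      push_neg at hlt
      refine ht e0 he0 (fun v hv => Finset.mem_filter.2
        ⟨subset_vset he0 hv, ?_⟩)
      have := deg_le_card H v
      omega
    have hmem := Nat.sSup_mem ⟨0, h0⟩ hbdd
    obtain ⟨v, hv, hvn⟩ := Finset.not_subset.1 (hmem e0 he0)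
    have hvvs : v ∈ vset H := subset_vset he0 hv
    have hdv : ¬ deg H v ≤ minDeg H - 1 + sSup S :=
      fun h => hvn (Finset.mem_filter.2 ⟨hvvs, h⟩)
    refine ⟨f v, Finset.mem_image_of_mem f hv, ?_⟩
    rw [deg_image hf hvvs]
    omega

lemma deg_union {L R A : HG} (hL : L ⊆ A) (hR : R ⊆ A) {e : Finset ℕ}
    (hint : L ∩ R = {e}) {u : ℕ} (hu : u ∈ e) :
    deg L u + deg R u ≤ deg A u + 1 := by
  have hsub : L.filter (fun s => u ∈ s) ∪ R.filter (fun s => u ∈ s)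
      ⊆ A.filter (fun s => u ∈ s) := by
    intro s hs
    rcases Finset.mem_union.1 hs with h | h
    · exact Finset.mem_filter.2 ⟨hL (Finset.mem_filter.1 h).1, (Finset.mem_filter.1 h).2⟩
    · exact Finset.mem_filter.2 ⟨hR (Finset.mem_filter.1 h).1, (Finset.mem_filter.1 h).2⟩
  have hinter : L.filter (fun s => u ∈ s) ∩ R.filter (fun s => u ∈ s) = {e} := by
    rw [← Finset.filter_inter_distrib, hint, Finset.filter_singleton, if_pos hu]
  have hcui := Finset.card_union_add_card_inter
    (L.filter (fun s => u ∈ s)) (R.filter (fun s => u ∈ s))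
  rw [hinter, Finset.card_singleton] at hcui
  have hcard := Finset.card_le_card hsub
  have e1 : deg L u = (L.filter (fun s => u ∈ s)).card := rfl
  have e2 : deg R u = (R.filter (fun s => u ∈ s)).card := rfl
  have e3 : deg A u = (A.filter (fun s => u ∈ s)).card := rfl
  omega

lemma sum_deg_eq {A : HG} (huA : IsUniform 2 A) :
    ∑ v ∈ vset A, deg A v = 2 * A.card := by
  have h1 : ∀ v, deg A v = ∑ e ∈ A, if v ∈ e then 1 else 0 := by
    intro v; rw [deg, Finset.card_filter]
  calc ∑ v ∈ vset A, deg A v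
      = ∑ v ∈ vset A, ∑ e ∈ A, if v ∈ e then 1 else 0 := by
        exact Finset.sum_congr rfl fun v _ => h1 v
    _ = ∑ e ∈ A, ∑ v ∈ vset A, if v ∈ e then 1 else 0 := Finset.sum_comm
    _ = ∑ e ∈ A, e.card := by
        refine Finset.sum_congr rfl fun e he => ?_
        rw [← Finset.card_filter, Finset.filter_mem_eq_inter,
          Finset.inter_eq_right.2 (subset_vset he)]
    _ = ∑ _e ∈ A, 2 := Finset.sum_congr rfl huA
    _ = 2 * A.card := by rw [Finset.sum_const, smul_eq_mul, mul_comm]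

lemma sum_deg_subset_le {A : HG} (S : Finset ℕ)
    (hind : ∀ e ∈ A, (S.filter (fun v => v ∈ e)).card ≤ 1) :
    ∑ v ∈ S, deg A v ≤ A.card := by
  have h1 : ∀ v, deg A v = ∑ e ∈ A, if v ∈ e then 1 else 0 := by
    intro v; rw [deg, Finset.card_filter]
  calc ∑ v ∈ S, deg A v
      = ∑ e ∈ A, ∑ v ∈ S, if v ∈ e then 1 else 0 := by
        rw [← Finset.sum_comm]
        exact Finset.sum_congr rfl fun v _ => h1 v
    _ = ∑ e ∈ A, (S.filter (fun v => v ∈ e)).card := by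
        refine Finset.sum_congr rfl fun e he => ?_
        rw [Finset.card_filter]
    _ ≤ ∑ _e ∈ A, 1 := Finset.sum_le_sum hind
    _ = A.card := by simp

end HG

/-- For any graph `A ∈ C(H₁,H₂)`, with `x = δ₁ + δ₂ - 1` and
`z = max{z(H₁), z(H₂)}`, we have `d(A) ≥ x(x+z)/(2x+z)`. -/
theorem density_lower_bound_C (H1 H2 A : HG)
    (hu1 : IsUniform 2 H1) (hu2 : IsUniform 2 H2) (huA : IsUniform 2 A)
    (hAne : A.Nonempty) (hC : InC H1 H2 A) :
    ((minDeg H1 : ℝ) + (minDeg H2 : ℝ) - 1) *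
        (((minDeg H1 : ℝ) + (minDeg H2 : ℝ) - 1) +
          (max (zpar H1) (zpar H2) : ℝ)) /
      (2 * ((minDeg H1 : ℝ) + (minDeg H2 : ℝ) - 1) +
        (max (zpar H1) (zpar H2) : ℝ)) ≤ dens A := by
  classical
  obtain ⟨e₀, he₀⟩ := hAne
  obtain ⟨L₀, R₀, hLc₀, hLs₀, hRc₀, hRs₀, hint₀⟩ := hC e₀ he₀
  have he₀LR : e₀ ∈ L₀ ∩ R₀ := hint₀ ▸ Finset.mem_singleton_self e₀
  have hH2ne : H2.Nonempty := by
    obtain ⟨f, hf, hK⟩ := hLc₀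
    have := (Finset.mem_inter.1 he₀LR).1
    rw [hK] at this
    obtain ⟨e', he', -⟩ := Finset.mem_image.1 this
    exact ⟨e', he'⟩
  have hH1ne : H1.Nonempty := by
    obtain ⟨f, hf, hK⟩ := hRc₀
    have := (Finset.mem_inter.1 he₀LR).2
    rw [hK] at this
    obtain ⟨e', he', -⟩ := Finset.mem_image.1 this
    exact ⟨e', he'⟩
  have hd1 : 1 ≤ minDeg H1 := one_le_minDeg hH1ne hu1
  have hd2 : 1 ≤ minDeg H2 := one_le_minDeg hH2ne hu2
  set δ1 := minDeg H1
  set δ2 := minDeg H2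
  set x := δ1 + δ2 - 1 with hx
  set z := max (zpar H1) (zpar H2) with hz
  -- Fact 1 : min degree of A is at least x
  have fact1 : ∀ v ∈ vset A, x ≤ deg A v := by
    intro v hv
    obtain ⟨e, he, hve⟩ := mem_vset_s16.1 hv
    obtain ⟨L, R, hLc, hLs, hRc, hRs, hint⟩ := hC e he
    have heLR : e ∈ L ∩ R := hint ▸ Finset.mem_singleton_self e
    have hvL : v ∈ vset L := mem_vset_s16.2 ⟨e, (Finset.mem_inter.1 heLR).1, hve⟩
    have hvR : v ∈ vset R := mem_vset_s16.2 ⟨e, (Finset.mem_inter.1 heLR).2, hve⟩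
    have h1 : δ2 ≤ deg L v := minDeg_le_deg_copy hLc hvL
    have h2 : δ1 ≤ deg R v := minDeg_le_deg_copy hRc hvR
    have h3 := deg_union hLs hRs hint hve
    omega
  -- Fact 2 : every edge has an endpoint of degree at least x + z
  have fact2 : ∀ e ∈ A, ∃ u ∈ e, x + z ≤ deg A u := by
    intro e he
    obtain ⟨L, R, hLc, hLs, hRc, hRs, hint⟩ := hC e he
    have heLR : e ∈ L ∩ R := hint ▸ Finset.mem_singleton_self e
    rcases le_total (zpar H1) (zpar H2) with hle | hle
    · obtain ⟨u, hu, hdu⟩ := exists_high_deg hu2 hLc (Finset.mem_inter.1 heLR).1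
      have h2 : δ1 ≤ deg R u :=
        minDeg_le_deg_copy hRc (mem_vset_s16.2 ⟨e, (Finset.mem_inter.1 heLR).2, hu⟩)
      have h3 := deg_union hLs hRs hint hu
      have hzz : z = zpar H2 := max_eq_right hle
      exact ⟨u, hu, by omega⟩
    · obtain ⟨u, hu, hdu⟩ := exists_high_deg hu1 hRc (Finset.mem_inter.1 heLR).2
      have h1 : δ2 ≤ deg L u :=
        minDeg_le_deg_copy hLc (mem_vset_s16.2 ⟨e, (Finset.mem_inter.1 heLR).1, hu⟩)
      have h3 := deg_union hLs hRs hint hu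
      have hzz : z = zpar H1 := max_eq_left hle
      exact ⟨u, hu, by omega⟩
  -- the partition of the vertex set
  set B := (vset A).filter (fun v => x + z ≤ deg A v) with hB
  set S := (vset A).filter (fun v => ¬ x + z ≤ deg A v) with hSdef
  have hsplit : B.card + S.card = (vset A).card :=
    Finset.card_filter_add_card_filter_not _
  have hsum : ∑ v ∈ B, deg A v + ∑ v ∈ S, deg A v = 2 * A.card := by
    rw [Finset.sum_filter_add_sum_filter_not, sum_deg_eq huA]
  have hBsum : (x + z) * B.card ≤ ∑ v ∈ B, deg A v := by
    rw [mul_comm]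
    exact Finset.card_nsmul_le_sum B _ _ (fun v hv => (Finset.mem_filter.1 hv).2)
  have hSsum : x * S.card ≤ ∑ v ∈ S, deg A v := by
    rw [mul_comm]
    exact Finset.card_nsmul_le_sum S _ _
      (fun v hv => fact1 v (Finset.mem_filter.1 hv).1)
  have hind : ∀ e ∈ A, (S.filter (fun v => v ∈ e)).card ≤ 1 := by
    intro e he
    obtain ⟨u, hu, hdu⟩ := fact2 e he
    have huS : u ∉ S := fun h => (Finset.mem_filter.1 h).2 hdu
    have hsub : S.filter (fun v => v ∈ e) ⊆ e.erase u := by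
      intro v hv
      obtain ⟨hvS, hve⟩ := Finset.mem_filter.1 hv
      exact Finset.mem_erase.2 ⟨fun h => huS (h ▸ hvS), hve⟩
    calc (S.filter (fun v => v ∈ e)).card ≤ (e.erase u).card :=
          Finset.card_le_card hsub
      _ = e.card - 1 := Finset.card_erase_of_mem hu
      _ ≤ 1 := by rw [huA e he]
  have hSm : x * S.card ≤ A.card := le_trans hSsum (sum_deg_subset_le S hind)
  have h2m : x * S.card + (x + z) * B.card ≤ 2 * A.card := by omega
  -- key numeric inequality
  have key : x * (x + z) * (vset A).card ≤ (2 * x + z) * A.card := by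
    have A1 : z * (x * S.card) ≤ z * A.card := Nat.mul_le_mul_left z hSm
    have A2 : x * (x * S.card + (x + z) * B.card) ≤ x * (2 * A.card) :=
      Nat.mul_le_mul_left x h2m
    have hn : (vset A).card = B.card + S.card := hsplit.symm
    rw [hn]
    nlinarith [A1, A2]
  -- vertex set is nonempty
  have hVpos : 0 < (vset A).card := by
    obtain ⟨v, hv⟩ : e₀.Nonempty := Finset.card_pos.1 (by rw [huA e₀ he₀]; norm_num)
    exact Finset.card_pos.2 ⟨v, subset_vset he₀ hv⟩
  -- rewrite the goal
  have hcast1 : (δ1 : ℝ) + (δ2 : ℝ) - 1 = (x : ℝ) := by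
    rw [hx]; push_cast [Nat.cast_sub (by omega : 1 ≤ δ1 + δ2)]; ring
  have hcast2 : (max ((zpar H1 : ℝ)) ((zpar H2 : ℝ))) = (z : ℝ) := by
    rw [hz]; push_cast; rfl
  rw [hcast1, hcast2]
  unfold HG.dens
  have hxpos : (0 : ℝ) < 2 * (x : ℝ) + (z : ℝ) := by
    have : 1 ≤ x := by omega
    positivity
  have hnpos : (0 : ℝ) < ((nV A : ℕ) : ℝ) := by
    exact_mod_cast hVpos
  rw [div_le_div_iff₀ hxpos hnpos]
  have key' : x * (x + z) * nV A ≤ nE A * (2 * x + z) := by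
    simpa [nE, nV, Nat.mul_comm] using key
  exact_mod_cast key'
end

section
/- Let H₁, H₂ be k-uniform hypergraphs with m_k(H₁) > m_k(H₂) > 1, H₂ strictly k-balanced and H₁ strictly balanced with respect to d_k(·, H₂). If F' is obtained from a k-graph F by attaching a copy of H₂ at an edge e ∈ E(F) intersecting F exactly in e, and then attaching vertex- and edge-disjoint copies of H₁ to each of the e(H₂) - 1 new edges (each copy intersecting the current graph exactly in that edge), then v(F') - v(F) - (e(F') - e(F))/m_k(H₁,H₂) = 0; equivalently, λ(F') = λ(F) where λ(F) = v(F) - e(F)/m_k(H₁, H₂). -/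
open Finset
open scoped Classical

open HG

/-- If every proper subset has strictly smaller value than the sup over all
subsets, the sup is attained at the whole set. -/
lemma sup'_powerset_eq_self (f : HG → ℝ) (H : HG)
    (h : ∀ J : HG, J ⊂ H →
      f J < H.powerset.sup' ⟨∅, Finset.empty_mem_powerset H⟩ f) :
    H.powerset.sup' ⟨∅, Finset.empty_mem_powerset H⟩ f = f H := by
  obtain ⟨J, hJ, hEq⟩ :=
    Finset.exists_mem_eq_sup' (s := H.powerset)
      ⟨∅, Finset.empty_mem_powerset H⟩ f
  rw [Finset.mem_powerset] at hJ
  rcases eq_or_ne J H with rfl | hne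
  · exact hEq
  · have := h J (lt_of_le_of_ne hJ hne)
    rw [hEq] at this
    exact absurd this (lt_irrefl _)

/-- A non-degenerate attachment step leaves `λ(F) = v(F) - e(F)/m_k(H₁,H₂)`
unchanged: attaching a copy of `H₂` at an edge and pairwise-disjoint copies of
`H₁` at its `e(H₂)-1` new edges adds `(v₂-k) + (e₂-1)(v₁-k)` vertices and
`(e₂-1)e₁` edges, and `λ(F') = λ(F)`. -/
theorem lambda_invariant_nondegenerate (k : ℕ) (hk : 2 ≤ k)
    (H1 H2 F F' : HG)
    (hu1 : IsUniform k H1) (hu2 : IsUniform k H2)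
    (h2 : 1 < mK k H2) (h12 : mK k H2 < mK k H1)
    (hb2 : StrictBal k H2) (hb1 : StrictBalWrt k H1 H2)
    (hv : nV F' = nV F + (nV H2 - k) + (nE H2 - 1) * (nV H1 - k))
    (he : nE F' = nE F + (nE H2 - 1) * nE H1) :
    (nV F' : ℝ) - (nE F' : ℝ) / mKK k H1 H2 =
      (nV F : ℝ) - (nE F : ℝ) / mKK k H1 H2 := by
  -- mK k H2 = dK k H2 by strict balancedness
  have hm2 : mK k H2 = dK k H2 := sup'_powerset_eq_self _ _ hb2
  have hM : mKK k H1 H2 = dKK k H1 H2 := sup'_powerset_eq_self _ _ hb1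
  -- the if-condition for dK k H2 holds
  have hcond2 : H2.Nonempty ∧ k + 1 ≤ nV H2 := by
    by_contra hc
    have : dK k H2 ≤ 1 := by
      unfold dK
      rw [if_neg hc]
      split_ifs with h'
      · have hk' : (2:ℝ) ≤ (k:ℝ) := by exact_mod_cast hk
        rw [div_le_one (by linarith)]
        linarith
      · norm_num
    rw [hm2] at h2; linarith
  have hdk2 : dK k H2 = ((nE H2 : ℝ) - 1) / ((nV H2 : ℝ) - (k : ℝ)) := by
    unfold dK; rw [if_pos hcond2]
  have hv2k : (1:ℝ) ≤ (nV H2 : ℝ) - (k:ℝ) := by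
    have := hcond2.2
    have : ((k:ℝ) + 1) ≤ (nV H2 : ℝ) := by exact_mod_cast this
    linarith
  have hm2pos : 0 < mK k H2 := by linarith
  -- from mK k H2 > 1 : nE H2 - 1 > nV H2 - k ≥ 1
  have he2 : (nV H2 : ℝ) - (k:ℝ) < (nE H2 : ℝ) - 1 := by
    have := h2
    rw [hm2, hdk2, lt_div_iff₀ (by linarith)] at this
    linarith
  -- mKK k H1 H2 > 0 : find the subset attaining mK k H1
  have hMpos : 0 < mKK k H1 H2 := by
    obtain ⟨J, hJ, hEq⟩ :=
      Finset.exists_mem_eq_sup' (s := H1.powerset)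
        ⟨∅, Finset.empty_mem_powerset H1⟩ (dK k)
    have hJdk : 1 < dK k J := by
      have h12' : mK k H1 = dK k J := hEq
      linarith
    have hcondJ : J.Nonempty ∧ k + 1 ≤ nV J := by
      by_contra hc
      have : dK k J ≤ 1 := by
        unfold dK
        rw [if_neg hc]
        split_ifs with h'
        · have hk' : (2:ℝ) ≤ (k:ℝ) := by exact_mod_cast hk
          rw [div_le_one (by linarith)]
          linarith
        · norm_num
      linarith
    have hvJ : ((k:ℝ) + 1) ≤ (nV J : ℝ) := by exact_mod_cast hcondJ.2
    have heJ : (1:ℝ) ≤ (nE J : ℝ) := by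
      have : 0 < nE J := Finset.card_pos.mpr hcondJ.1
      exact_mod_cast this
    have hcondJ' : H2.Nonempty ∧ k ≤ nV J :=
      ⟨hcond2.1, le_trans (Nat.le_succ k) hcondJ.2⟩
    have hdkkJ : 0 < dKK k J H2 := by
      unfold dKK
      rw [if_pos hcondJ']
      apply div_pos (by linarith)
      have h1m : 0 < 1 / mK k H2 := by positivity
      linarith
    calc (0:ℝ) < dKK k J H2 := hdkkJ
      _ ≤ mKK k H1 H2 := by
        unfold mKK
        exact Finset.le_sup' (fun J => dKK k J H2) hJ
  -- the if-condition for dKK k H1 H2 holds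
  have hcond1 : H2.Nonempty ∧ k ≤ nV H1 := by
    by_contra hc
    have : dKK k H1 H2 = 0 := by unfold dKK; rw [if_neg hc]
    rw [hM, this] at hMpos; exact lt_irrefl _ hMpos
  have hdkk1 : dKK k H1 H2 =
      (nE H1 : ℝ) / ((nV H1 : ℝ) - (k : ℝ) + 1 / mK k H2) := by
    unfold dKK; rw [if_pos hcond1]
  have hv1k : (0:ℝ) ≤ (nV H1 : ℝ) - (k:ℝ) := by
    have : (k:ℝ) ≤ (nV H1 : ℝ) := by exact_mod_cast hcond1.2
    linarith
  have hdenpos : 0 < (nV H1 : ℝ) - (k:ℝ) + 1 / mK k H2 := by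
    have : 0 < 1 / mK k H2 := by positivity
    linarith
  have he1pos : (0:ℝ) < (nE H1 : ℝ) := by
    by_contra hc
    push_neg at hc
    have : mKK k H1 H2 ≤ 0 := by
      rw [hM, hdkk1]
      exact div_nonpos_of_nonpos_of_nonneg hc (le_of_lt hdenpos)
    linarith
  -- cast the counting hypotheses
  have hvH2 : k ≤ nV H2 := le_trans (Nat.le_succ k) hcond2.2
  have heH2 : 1 ≤ nE H2 := by
    have : (1:ℝ) < (nE H2 : ℝ) := by linarith
    exact_mod_cast le_of_lt this
  have hvH1 : k ≤ nV H1 := hcond1.2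
  have hvR : (nV F' : ℝ) = (nV F : ℝ) + ((nV H2 : ℝ) - k)
      + ((nE H2 : ℝ) - 1) * ((nV H1 : ℝ) - k) := by
    rw [hv]; push_cast [hvH2, heH2, hvH1]; ring
  have heR : (nE F' : ℝ) = (nE F : ℝ) + ((nE H2 : ℝ) - 1) * (nE H1 : ℝ) := by
    rw [he]; push_cast [heH2]; ring
  -- main computation
  have hm2val : mK k H2 = ((nE H2 : ℝ) - 1) / ((nV H2 : ℝ) - (k : ℝ)) := by
    rw [hm2, hdk2]
  have hMval : mKK k H1 H2 =
      (nE H1 : ℝ) / ((nV H1 : ℝ) - (k : ℝ) + 1 / mK k H2) := by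
    rw [hM, hdkk1]
  have key : ((nV H2 : ℝ) - k) + ((nE H2 : ℝ) - 1) * ((nV H1 : ℝ) - k)
      = (((nE H2 : ℝ) - 1) * (nE H1 : ℝ)) / mKK k H1 H2 := by
    rw [hMval, hm2val]
    have h1 : ((nE H2 : ℝ) - 1) ≠ 0 := by linarith
    have h2' : ((nV H2 : ℝ) - (k:ℝ)) ≠ 0 := by linarith
    have h3 : (nE H1 : ℝ) ≠ 0 := ne_of_gt he1pos
    rw [one_div_div]
    field_simp
    ring
  rw [hvR, heR, add_div]
  linarith [key]
end
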